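/- Let X be a Banach space with a basis (e_i) that is asymptotically symmetric with constant C, and let (x_i) be a normalized basic sequence in X generating a spreading model (x̃_i). Then (x̃_i) is C-symmetric: for every m, scalars (a_i)_{i=1}^m and permutation σ of {1,...,m}, ∥∑_{i=1}^m a_i x̃_i∥ ≤ C ∥∑_{i=1}^m a_i x̃_{σ(i)}∥. -/
import Mathlib

open Filter

/-- `IterLim m F L` expresses that the iterated limit
`lim_{n_1 → ∞} ... lim_{n_m → ∞} F (n_1, ..., n_m)` exists and equals `L`
(the outermost limit being over the first variable). -/
def IterLim : ∀ m : ℕ, ((Fin m → ℕ) → ℝ) → ℝ → Prop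
  | 0, F, L => F (fun i => i.elim0) = L
  | m + 1, F, L => ∃ g : ℕ → ℝ,
      (∀ n : ℕ, IterLim m (fun ns => F (Fin.cons n ns)) (g n)) ∧
      Filter.Tendsto g Filter.atTop (nhds L)

lemma comp_cons_eq {m : ℕ} (f : ℕ → ℕ) (n : ℕ) (ns : Fin m → ℕ) :
    (fun i => f ((Fin.cons n ns : Fin (m+1) → ℕ) i)) = Fin.cons (f n) (fun i => f (ns i)) := by
  funext i
  rcases Fin.eq_zero_or_eq_succ i with rfl | ⟨i', rfl⟩ <;> simp

lemma strictMono_cons' {m : ℕ} {n : ℕ} {ns : Fin m → ℕ} (h : StrictMono ns)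
    (h2 : ∀ i, n < ns i) : StrictMono (Fin.cons n ns) := by
  intro i j hij
  rcases Fin.eq_zero_or_eq_succ i with rfl | ⟨i', rfl⟩ <;>
    rcases Fin.eq_zero_or_eq_succ j with rfl | ⟨j', rfl⟩
  · exact absurd hij (lt_irrefl _)
  · simpa using h2 j'
  · exact absurd hij (Fin.not_lt_zero _)
  · simp only [Fin.cons_succ]
    exact h (Fin.succ_lt_succ_iff.mp hij)

/-- constant functions have iterated limits -/
lemma iterLim_const : ∀ (m : ℕ) (c : ℝ), IterLim m (fun _ => c) c
  | 0, c => rfl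
  | m + 1, c => ⟨fun _ => c, fun _ => iterLim_const m c, tendsto_const_nhds⟩

/-- identification lemma: if `F` is within `ε` of `c` on all large strictly
monotone tuples, then any iterated limit of `F` is within `ε` of `c`. -/
lemma iterLim_close : ∀ (m : ℕ) (F : (Fin m → ℕ) → ℝ) (L c ε : ℝ),
    IterLim m F L →
    (∃ N : ℕ, ∀ ns : Fin m → ℕ, StrictMono ns → (∀ i, N ≤ ns i) → |F ns - c| ≤ ε) →
    |L - c| ≤ ε := by
  intro m
  induction m with
  | zero =>
    intro F L c ε hF ⟨N, hN⟩
    rw [show L = F (fun i => i.elim0) from hF.symm]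
    exact hN _ (fun i => i.elim0) (fun i => i.elim0)
  | succ m IH =>
    rintro F L c ε ⟨g, hg, ht⟩ ⟨N, hN⟩
    have hev : ∀ᶠ n in atTop, |g n - c| ≤ ε := by
      rw [eventually_atTop]
      refine ⟨N, fun n hn => ?_⟩
      refine IH _ (g n) c ε (hg n) ⟨max N (n + 1), fun ns hns hge => ?_⟩
      refine hN (Fin.cons n ns) (strictMono_cons' hns (fun i => ?_)) (fun i => ?_)
      · have := hge i; omega
      · rcases Fin.eq_zero_or_eq_succ i with rfl | ⟨i', rfl⟩
        · simpa using hn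
        · have := hge i'; simp only [Fin.cons_succ]; omega
    exact le_of_tendsto ((ht.sub_const c).abs) hev

/-- iterated limits pass to subsequences (applied in every coordinate). -/
lemma iterLim_comp : ∀ (m : ℕ) (F : (Fin m → ℕ) → ℝ) (L : ℝ) (θ : ℕ → ℕ),
    StrictMono θ → IterLim m F L → IterLim m (fun ns => F (fun i => θ (ns i))) L := by
  intro m
  induction m with
  | zero =>
    intro F L θ _ hF
    show F _ = L
    rw [← hF]
    congr 1
    funext i
    exact i.elim0
  | succ m IH =>
    rintro F L θ hθ ⟨g, hg, ht⟩
    refine ⟨fun n => g (θ n), fun n => ?_, ht.comp hθ.tendsto_atTop⟩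
    have h1 := IH (fun ns => F (Fin.cons (θ n) ns)) (g (θ n)) θ hθ (hg (θ n))
    have h2 : (fun ns : Fin m → ℕ => F (fun i => θ ((Fin.cons n ns : Fin (m+1) → ℕ) i)))
        = fun ns => F (Fin.cons (θ n) (fun i => θ (ns i))) := by
      funext ns
      rw [comp_cons_eq]
    exact h2 ▸ h1

/-- diagonal extraction via sequential compactness of `J → ℝ`. -/
lemma diag_subseq {J : Type} [Countable J] (f : J → ℕ → ℝ)
    (hf : ∀ j, ∃ M, ∀ n, |f j n| ≤ M) :
    ∃ θ : ℕ → ℕ, StrictMono θ ∧ ∀ j, ∃ L, Tendsto (fun n => f j (θ n)) atTop (nhds L) := by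
  choose M hM using hf
  have hcomp : IsCompact (Set.univ.pi fun j : J => Set.Icc (-(M j)) (M j)) :=
    isCompact_univ_pi fun j => isCompact_Icc
  have hmem : ∀ n, (fun j => f j n) ∈ Set.univ.pi fun j : J => Set.Icc (-(M j)) (M j) := by
    intro n j _
    have := hM j n
    rw [abs_le] at this
    exact ⟨this.1, this.2⟩
  obtain ⟨a, _, θ, hθ, htend⟩ := hcomp.tendsto_subseq hmem
  refine ⟨θ, hθ, fun j => ⟨a j, ?_⟩⟩
  exact tendsto_pi_nhds.1 htend j

/-- main extraction lemma: a common subsequence along which a countable family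
of bounded functions all have iterated limits. -/
lemma exists_subseq_iterLim : ∀ (m : ℕ) {J : Type} [Countable J]
    (F : J → (Fin m → ℕ) → ℝ), (∀ j, ∃ M, ∀ ns, |F j ns| ≤ M) →
    ∃ φ : ℕ → ℕ, StrictMono φ ∧
      ∀ j, ∃ L, IterLim m (fun ns => F j (fun i => φ (ns i))) L := by
  intro m
  induction m with
  | zero =>
    intro J _ F _
    exact ⟨id, strictMono_id, fun j => ⟨F j (fun i => i.elim0), rfl⟩⟩
  | succ m IH =>
    intro J _ F hF
    obtain ⟨ψ, hψ, hIter⟩ := IH (J := J × ℕ) (fun p ns => F p.1 (Fin.cons p.2 ns))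
      (fun p => ⟨(hF p.1).choose, fun ns => (hF p.1).choose_spec _⟩)
    choose g hg using hIter
    have hgb : ∀ j : J, ∃ M, ∀ n, |g (j, ψ n)| ≤ M := by
      intro j
      obtain ⟨M, hM⟩ := hF j
      refine ⟨M, fun n => ?_⟩
      have := iterLim_close m _ (g (j, ψ n)) 0 M (hg (j, ψ n))
        ⟨0, fun ns _ _ => by simpa using hM _⟩
      simpa using this
    obtain ⟨θ, hθ, hconv⟩ := diag_subseq (fun j n => g (j, ψ n)) hgb
    refine ⟨ψ ∘ θ, hψ.comp hθ, fun j => ?_⟩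
    obtain ⟨L, hL⟩ := hconv j
    refine ⟨L, ⟨fun n => g (j, ψ (θ n)), fun n => ?_, hL⟩⟩
    have h1 := iterLim_comp m _ (g (j, ψ (θ n))) θ hθ (hg (j, ψ (θ n)))
    have h2 : (fun ns : Fin m → ℕ => F j (fun i => (ψ ∘ θ) ((Fin.cons n ns : Fin (m+1) → ℕ) i)))
        = fun ns => F j (Fin.cons (ψ (θ n)) (fun i => ψ (θ (ns i)))) := by
      funext ns
      rw [comp_cons_eq]
      rfl
    exact h2 ▸ h1

/-- if `X` is asymptotically symmetric with constant `C` (iterated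
limits of norms of sums of bounded sequences are permutation invariant up to
factor `C`) and `(x_i)` is a normalized sequence in `X` generating a spreading
model `(x̃_i)`, then `(x̃_i)` is `C`-symmetric. -/
theorem stmt8 {X Y : Type*} [NormedAddCommGroup X] [NormedSpace ℝ X] [CompleteSpace X]
    [NormedAddCommGroup Y] [NormedSpace ℝ Y]
    (C : ℝ)
    (hAS : ∀ (m : ℕ) (x : Fin m → ℕ → X),
      (∀ i, Bornology.IsBounded (Set.range (x i))) →
      ∀ σ : Equiv.Perm (Fin m), ∀ L L' : ℝ,
      IterLim m (fun ns => ‖∑ i, x i (ns i)‖) L →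
      IterLim m (fun ns => ‖∑ i, x (σ i) (ns i)‖) L' →
      L ≤ C * L')
    (x : ℕ → X) (hx : ∀ n, ‖x n‖ = 1)
    (xt : ℕ → Y)
    (hSM : ∀ ε : ℝ, 0 < ε → ∀ k : ℕ, ∃ N : ℕ, ∀ n : Fin k → ℕ,
      StrictMono n → (∀ i, N ≤ n i) →
      ∀ a : Fin k → ℝ, (∀ i, |a i| ≤ 1) →
      |‖∑ i, a i • x (n i)‖ - ‖∑ i, a i • xt (i : ℕ)‖| < ε) :
    ∀ (m : ℕ) (a : Fin m → ℝ) (σ : Equiv.Perm (Fin m)),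
      ‖∑ i, a i • xt (i : ℕ)‖ ≤ C * ‖∑ i, a i • xt ((σ i : Fin m) : ℕ)‖ := by
  -- first: C ≥ 1
  have hC : 1 ≤ C := by
    have hb : ∀ i : Fin 1, Bornology.IsBounded
        (Set.range ((fun (_ : Fin 1) (n : ℕ) => x n) i)) := by
      intro i
      rw [isBounded_iff_forall_norm_le]
      exact ⟨1, by rintro _ ⟨n, rfl⟩; exact (hx n).le⟩
    have hiter : IterLim 1 (fun ns : Fin 1 → ℕ =>
        ‖∑ i, (fun (_ : Fin 1) (n : ℕ) => x n) i (ns i)‖) 1 := by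
      have he : (fun ns : Fin 1 → ℕ => ‖∑ i, (fun (_ : Fin 1) (n : ℕ) => x n) i (ns i)‖)
          = fun _ => (1 : ℝ) := by
        funext ns
        simp [hx]
      rw [he]
      exact iterLim_const 1 1
    have := hAS 1 (fun _ n => x n) hb (Equiv.refl _) 1 1 hiter hiter
    linarith
  have hC0 : (0 : ℝ) ≤ C := by linarith
  intro m a σ
  -- scale down the coefficients
  set S : ℝ := (∑ i, |a i|) + 1 with hSdef
  have hSpos : 0 < S := by positivity
  set b : Fin m → ℝ := fun i => a i / S with hbdef
  have hb1 : ∀ i, |b i| ≤ 1 := by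
    intro i
    rw [hbdef]
    rw [abs_div, abs_of_pos hSpos, div_le_one hSpos]
    have h1 : |a i| ≤ ∑ j, |a j| :=
      Finset.single_le_sum (fun j _ => abs_nonneg (a j)) (Finset.mem_univ i)
    linarith
  have hab : ∀ (f : Fin m → ℕ), ∑ i, a i • xt (f i) = S • ∑ i, b i • xt (f i) := by
    intro f
    rw [Finset.smul_sum]
    refine Finset.sum_congr rfl fun i _ => ?_
    rw [smul_smul, hbdef]
    congr 1
    field_simp
  suffices h : ‖∑ i, b i • xt (i : ℕ)‖ ≤ C * ‖∑ i, b i • xt ((σ i : Fin m) : ℕ)‖ by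
    rw [show (fun i : Fin m => a i • xt (i : ℕ)) = fun i => a i • xt ((fun j : Fin m => (j : ℕ)) i) from rfl]
    rw [hab (fun j : Fin m => (j : ℕ)), hab (fun j : Fin m => ((σ j : Fin m) : ℕ)),
      norm_smul, norm_smul, Real.norm_eq_abs, abs_of_pos hSpos, mul_left_comm]
    exact mul_le_mul_of_nonneg_left h hSpos.le
  -- key ε-estimate
  have key : ∀ ε : ℝ, 0 < ε →
      ‖∑ i, b i • xt (i : ℕ)‖ ≤ C * ‖∑ i, b i • xt ((σ i : Fin m) : ℕ)‖ + (1 + C) * ε := by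
    intro ε hε
    obtain ⟨N, hN⟩ := hSM ε hε m
    -- the two coefficient tuples
    set c : Bool → Fin m → ℝ := fun j => if j then (fun i => b (σ⁻¹ i)) else b with hcdef
    have hc1 : ∀ j i, |c j i| ≤ 1 := by
      rintro (_ | _) i <;> simp [hcdef, hb1]
    have hFb : ∀ j : Bool, ∃ M, ∀ ns : Fin m → ℕ, |‖∑ i, c j i • x (ns i)‖| ≤ M := by
      intro j
      refine ⟨(m : ℝ), fun ns => ?_⟩
      rw [abs_of_nonneg (norm_nonneg _)]
      calc ‖∑ i, c j i • x (ns i)‖ ≤ ∑ i, ‖c j i • x (ns i)‖ := norm_sum_le _ _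
        _ ≤ ∑ _i : Fin m, (1 : ℝ) := by
            refine Finset.sum_le_sum fun i _ => ?_
            rw [norm_smul, hx, mul_one, Real.norm_eq_abs]
            exact hc1 j i
        _ = (m : ℝ) := by simp
    obtain ⟨φ, hφ, hIter⟩ := exists_subseq_iterLim m (J := Bool)
      (fun j ns => ‖∑ i, c j i • x (ns i)‖) hFb
    obtain ⟨L₀, hL₀⟩ := hIter false
    obtain ⟨L₁, hL₁⟩ := hIter true
    -- apply asymptotic symmetry with σ⁻¹
    have hbnd : ∀ i : Fin m, Bornology.IsBounded
        (Set.range ((fun (i : Fin m) (n : ℕ) => b i • x (φ n)) i)) := by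
      intro i
      rw [isBounded_iff_forall_norm_le]
      refine ⟨1, ?_⟩
      rintro _ ⟨n, rfl⟩
      simp only [norm_smul, hx, mul_one, Real.norm_eq_abs]
      exact hb1 i
    have hmain : L₀ ≤ C * L₁ := by
      refine hAS m (fun (i : Fin m) (n : ℕ) => b i • x (φ n)) hbnd σ⁻¹ L₀ L₁ ?_ ?_
      · exact hL₀
      · exact hL₁
    -- identify the limits
    have hid0 : |L₀ - ‖∑ i, b i • xt (i : ℕ)‖| ≤ ε := by
      refine iterLim_close m _ L₀ _ ε hL₀ ⟨N, fun ns hns hge => ?_⟩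
      have := hN (fun i => φ (ns i)) (hφ.comp hns)
        (fun i => le_trans (hge i) hφ.le_apply) b hb1
      exact this.le
    have hid1 : |L₁ - ‖∑ i, b (σ⁻¹ i) • xt (i : ℕ)‖| ≤ ε := by
      refine iterLim_close m _ L₁ _ ε hL₁ ⟨N, fun ns hns hge => ?_⟩
      have := hN (fun i => φ (ns i)) (hφ.comp hns)
        (fun i => le_trans (hge i) hφ.le_apply) (fun i => b (σ⁻¹ i)) (fun i => hb1 _)
      exact this.le
    have hperm : ∑ i, b (σ⁻¹ i) • xt (i : ℕ) = ∑ i, b i • xt ((σ i : Fin m) : ℕ) := by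
      rw [← Equiv.sum_comp σ (fun i => b (σ⁻¹ i) • xt (i : ℕ))]
      simp
    rw [hperm] at hid1
    rw [abs_le] at hid0 hid1
    nlinarith [hid0.1, hid0.2, hid1.1, hid1.2]
  -- conclude by letting ε → 0
  refine le_of_forall_pos_le_add fun δ hδ => ?_
  have h1C : (0 : ℝ) < 1 + C := by linarith
  have := key (δ / (1 + C)) (by positivity)
  rwa [mul_div_cancel₀ _ (ne_of_gt h1C)] at this
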